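/- arXiv:2002.08876 — 2 statements merged into one kernel-verified Lean document; each statement's English description precedes it below -/
import Mathlib

section
/- Localization of a Lipschitz retraction. Let X ⊂ ℝ^n be open and let Γ ⊂ X be a Lipschitz neighborhood retract of X. Then for every open set U ⊂ X and every ε > 0, there exist a Lipschitz map p : ℝ^n → ℝ^n and an open set O ⊂ X with Γ ∩ U ⊂ O ⊂ U such that: |p − id| ≤ ε everywhere; p(O) ⊂ Γ; and p = id on Γ ∪ (ℝ^n ∖ U). Moreover p can be built so that its Lipschitz constant depends only on n and Γ (not on U and ε). -/
open MeasureTheory Metric Set Filter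
open scoped ENNReal NNReal Topology BigOperators

noncomputable section

namespace Paper

/-- Euclidean space ℝ^n. -/
abbrev Vn (n : ℕ) := EuclideanSpace ℝ (Fin n)

/-- The d-dimensional Hausdorff measure on ℝ^n. -/
abbrev HM (n d : ℕ) : Measure (Vn n) := Measure.hausdorffMeasure (d : ℝ)

/-- The scale radius `r_s(x)`; for `s = ∞` it equals the distance to the complement of `X`. -/
def scaleRadius {n : ℕ} (X : Set (Vn n)) (s : ℝ≥0∞) (x : Vn n) : ℝ≥0∞ :=
  if s = ⊤ then EMetric.infEdist x Xᶜ
  else min (s / (1 + s) * EMetric.infEdist x Xᶜ) s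

/-- Real version of the scale radius, for a finite scale `t`. -/
def scaleRadiusReal {n : ℕ} (X : Set (Vn n)) (t : ℝ) (x : Vn n) : ℝ :=
  (scaleRadius X (ENNReal.ofReal t) x).toReal

/-- `E` is relatively closed in `X`. -/
def RelClosedIn {n : ℕ} (X E : Set (Vn n)) : Prop :=
  ∃ C : Set (Vn n), IsClosed C ∧ E = C ∩ X

/-- `E` is `H^d` locally finite in `X`. -/
def HdLocallyFiniteOn (n d : ℕ) (X E : Set (Vn n)) : Prop :=
  ∀ x ∈ X, ∃ r : ℝ, 0 < r ∧ HM n d (E ∩ ball x r) < ⊤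

/-- The core `E^*` of `E` in `X`: the support of `H^d ⌞ E` in `X`. -/
def core (n d : ℕ) (X E : Set (Vn n)) : Set (Vn n) :=
  {x | x ∈ X ∧ ∀ r : ℝ, 0 < r → 0 < HM n d (E ∩ ball x r)}

/-- The support in `X` of a measure `μ`. -/
def suppIn {n : ℕ} (X : Set (Vn n)) (μ : Measure (Vn n)) : Set (Vn n) :=
  {x | x ∈ X ∧ ∀ r : ℝ, 0 < r → 0 < μ (ball x r)}

/-- A sliding deformation of `E` along the boundary `Γ` in the open set `U ⊆ X`. -/
structure IsSlidingDeformation {n : ℕ} (X Γ E U : Set (Vn n)) (f : Vn n → Vn n) : Prop where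
  lipschitz : ∃ K : ℝ≥0, LipschitzOnWith K f E
  mapsToX : ∀ x ∈ E, f x ∈ X
  homotopy : ∃ F : ℝ × Vn n → Vn n,
    ContinuousOn F (Set.Icc (0:ℝ) 1 ×ˢ E) ∧
    (∀ x ∈ E, F (0, x) = x) ∧
    (∀ x ∈ E, F (1, x) = f x) ∧
    (∀ t ∈ Set.Icc (0:ℝ) 1, ∀ x ∈ E, F (t, x) ∈ X) ∧
    (∀ t ∈ Set.Icc (0:ℝ) 1, ∀ x ∈ E ∩ Γ, F (t, x) ∈ Γ) ∧
    (∀ t ∈ Set.Icc (0:ℝ) 1, ∀ x ∈ E ∩ U, F (t, x) ∈ U) ∧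
    ∃ K : Set (Vn n), IsCompact K ∧ K ⊆ E ∩ U ∧
      ∀ t ∈ Set.Icc (0:ℝ) 1, ∀ x ∈ E \ K, F (t, x) = x

/-- A global sliding deformation in `U` is a sliding deformation of `X` itself. -/
def IsGlobalSlidingDeformation {n : ℕ} (X Γ U : Set (Vn n)) (f : Vn n → Vn n) : Prop :=
  IsSlidingDeformation X Γ X U f

/-- `E` is `(κ,h,s)`-quasiminimal with respect to the energy `I` along `Γ` in `X`. -/
def Quasiminimal {n : ℕ} (I : Measure (Vn n)) (X Γ E : Set (Vn n))
    (κ h : ℝ) (s : ℝ≥0∞) : Prop :=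
  ∀ (x : Vn n) (r : ℝ), 0 < r → ENNReal.ofReal r ≤ scaleRadius X s x → ball x r ⊆ X →
    ∀ f : Vn n → Vn n, IsSlidingDeformation X Γ E (ball x r) f →
      I {y | y ∈ E ∧ f y ≠ y} ≤
        ENNReal.ofReal κ * I (f '' {y | y ∈ E ∧ f y ≠ y}) +
        ENNReal.ofReal h * I (E ∩ ball x (h * r))

/-- Admissible energy in `X`, with comparability constant `Λ` (Definition of the paper). -/
structure AdmissibleEnergyWith {n : ℕ} (d : ℕ) (X : Set (Vn n)) (I : Measure (Vn n))
    (Λ : ℝ) : Prop where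
  one_le : 1 ≤ Λ
  le_hausdorff : ∀ A : Set (Vn n), A ⊆ X → I A ≤ ENNReal.ofReal Λ * HM n d A
  hausdorff_le : ∀ A : Set (Vn n), A ⊆ X → HM n d A ≤ ENNReal.ofReal Λ * I A
  tangentRatio : ∀ x ∈ X, ∀ W : AffineSubspace ℝ (Vn n), x ∈ W →
    Module.finrank ℝ W.direction = d →
    ∀ f : Vn n → Vn n, ContDiff ℝ 1 f → f x = x →
      (∀ v ∈ W.direction, fderiv ℝ f x v = v) →
      Tendsto (fun r : ℝ =>
          I (f '' ((W : Set (Vn n)) ∩ ball x r)) / I ((W : Set (Vn n)) ∩ ball x r))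
        (𝓝[>] 0) (𝓝 1)
  elliptic : ∀ x ∈ X, ∃ R : ℝ, 0 < R ∧ closedBall x R ⊆ X ∧ ∃ ε : ℝ → ℝ,
    (∀ r : ℝ, 0 < r → r ≤ R → 0 ≤ ε r) ∧ Tendsto ε (𝓝[>] 0) (𝓝 0) ∧
    ∀ r : ℝ, 0 < r → r ≤ R → ∀ W : AffineSubspace ℝ (Vn n), x ∈ W →
      Module.finrank ℝ W.direction = d →
      ∀ S : Set (Vn n), IsCompact S → S ⊆ closedBall x r → HM n d S < ⊤ →
        (¬ ∃ ψ : Vn n → Vn n, (∃ K : ℝ≥0, LipschitzOnWith K ψ (closedBall x r)) ∧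
            ψ '' closedBall x r ⊆ closedBall x r ∧
            (∀ y ∈ (W : Set (Vn n)) ∩ sphere x r, ψ y = y) ∧
            ψ '' S ⊆ (W : Set (Vn n)) ∩ sphere x r) →
        I ((W : Set (Vn n)) ∩ ball x r) ≤ I (S ∩ ball x r) + ENNReal.ofReal (ε r * r ^ d)

/-- Admissible energy in `X` (with an unspecified comparability constant). -/
def AdmissibleEnergy {n : ℕ} (d : ℕ) (X : Set (Vn n)) (I : Measure (Vn n)) : Prop :=
  ∃ Λ : ℝ, AdmissibleEnergyWith d X I Λ

/-- `E` is `H^d`-rectifiable: covered, up to an `H^d`-null set, by countably many Lipschitz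
images of subsets of `ℝ^d`. -/
def HdRectifiable (n d : ℕ) (E : Set (Vn n)) : Prop :=
  ∃ (f : ℕ → EuclideanSpace ℝ (Fin d) → Vn n) (A : ℕ → Set (EuclideanSpace ℝ (Fin d))),
    (∀ k, ∃ K : ℝ≥0, LipschitzOnWith K (f k) (A k)) ∧
    HM n d (E \ ⋃ k, f k '' A k) = 0

/-- Blow-up measures `(2r)^{-d} (H^d ⌞ F)(x + r(· - x))`. -/
def blowup (n d : ℕ) (F : Set (Vn n)) (x : Vn n) (r : ℝ) : Measure (Vn n) :=
  (ENNReal.ofReal (2 * r) ^ d)⁻¹ •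
    Measure.map (fun y => x + r⁻¹ • (y - x)) ((HM n d).restrict F)

/-- The linear subspace `W` is the direction of an approximate tangent `d`-plane of `F` at `x`:
the blow-up measures converge weakly to `H^d` restricted to the affine plane `x + W`. -/
def ApproxTangentAt (n d : ℕ) (F : Set (Vn n)) (x : Vn n) (W : Submodule ℝ (Vn n)) : Prop :=
  Module.finrank ℝ W = d ∧
  ∀ g : Vn n → ℝ, Continuous g → HasCompactSupport g →
    Tendsto (fun r : ℝ => ∫ y, g y ∂(blowup n d F x r)) (𝓝[>] 0)
      (𝓝 (∫ y, g y ∂((HM n d).restrict ((fun v => x + v) '' (W : Set (Vn n))))))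

/-- Weak convergence of a sequence of Radon measures, in the open set `X`. -/
def WeakTendstoIn {n : ℕ} (X : Set (Vn n)) (μ : ℕ → Measure (Vn n))
    (ν : Measure (Vn n)) : Prop :=
  ∀ g : Vn n → ℝ, Continuous g → HasCompactSupport g → tsupport g ⊆ X →
    Tendsto (fun i => ∫ y, g y ∂(μ i)) atTop (𝓝 (∫ y, g y ∂ν))

/-- Orthogonal projection onto a subspace, as a continuous linear map of the ambient space. -/
def projL {n : ℕ} (W : Submodule ℝ (Vn n)) : Vn n →L[ℝ] Vn n :=
  W.subtypeL.comp (Submodule.orthogonalProjectionOnto W)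

/-- `γ` is the Haar probability measure on the Grassmannian of `d`-planes of the subspace `W₀`
(realized as orthogonal projection operators): it is a probability measure carried by the set of
orthogonal projections onto `d`-dimensional subspaces of `W₀`, invariant under the conjugation
action of the orthogonal transformations preserving `W₀`. -/
def IsGrassHaar (n d : ℕ) (W₀ : Submodule ℝ (Vn n))
    (γ : Measure (Vn n →L[ℝ] Vn n)) : Prop :=
  IsProbabilityMeasure γ ∧
  γ {P | ¬ ∃ W : Submodule ℝ (Vn n), W ≤ W₀ ∧ Module.finrank ℝ W = d ∧ P = projL W} = 0 ∧
  ∀ g : Vn n ≃ₗᵢ[ℝ] Vn n, g '' (W₀ : Set (Vn n)) = (W₀ : Set (Vn n)) →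
    Measure.map (fun P => ((g.toContinuousLinearEquiv : Vn n →L[ℝ] Vn n).comp
        (P.comp ((g.symm.toContinuousLinearEquiv : Vn n →L[ℝ] Vn n))))) γ = γ

/-- `𝓘` is induced by a continuous integrand `i : X × G(d,n) → (0,∞)`. -/
def InducedByContinuousIntegrand {n : ℕ} (d : ℕ) (X : Set (Vn n))
    (I : Measure (Vn n)) : Prop :=
  ∃ i : Vn n × (Vn n →L[ℝ] Vn n) → ℝ,
    ContinuousOn i (X ×ˢ {P | ∃ W : Submodule ℝ (Vn n), Module.finrank ℝ W = d ∧ P = projL W}) ∧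
    (∀ p ∈ X ×ˢ {P | ∃ W : Submodule ℝ (Vn n), Module.finrank ℝ W = d ∧ P = projL W},
      0 < i p) ∧
    ∀ F : Set (Vn n), F ⊆ X → MeasurableSet F → HM n d F < ⊤ → HdRectifiable n d F →
      ∀ τ : Vn n → Submodule ℝ (Vn n),
        (∀ᵐ x ∂((HM n d).restrict F), ApproxTangentAt n d F x (τ x)) →
        I F = ∫⁻ x in F, ENNReal.ofReal (i (x, projL (τ x))) ∂(HM n d)

/-- A Lipschitz neighborhood retract of `X`. -/
def LipNbhdRetract {n : ℕ} (X Γ : Set (Vn n)) : Prop :=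
  ∃ O : Set (Vn n), IsOpen O ∧ Γ ⊆ O ∧ O ⊆ X ∧
    ∃ ρ : Vn n → Vn n, (∃ K : ℝ≥0, LipschitzOnWith K ρ O) ∧ ρ '' O ⊆ Γ ∧ ∀ x ∈ Γ, ρ x = x

/-- `Γ` is locally `C¹`-diffeomorphic to a cone. -/
def LocallyDiffeoToCone {n : ℕ} (X Γ : Set (Vn n)) : Prop :=
  ∀ x ∈ Γ, ∃ R : ℝ, 0 < R ∧ closedBall x R ⊆ X ∧
    ∃ O : Set (Vn n), IsOpen O ∧ x ∈ O ∧
    ∃ φ ψ : Vn n → Vn n,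
      ContDiffOn ℝ 1 φ (ball x R) ∧ ContDiffOn ℝ 1 ψ O ∧
      φ '' ball x R = O ∧ (∀ y ∈ ball x R, ψ (φ y) = y) ∧ (∀ z ∈ O, φ (ψ z) = z) ∧
      φ x = x ∧
      ∃ S : Set (Vn n), IsClosed S ∧ (∀ y ∈ S, ∀ t : ℝ, 0 ≤ t → x + t • (y - x) ∈ S) ∧
        φ '' (Γ ∩ ball x R) = S ∩ O

/-- A dyadic cell of the grid `𝓔_n(k)`. -/
def IsDyadicCell (n k : ℕ) (A : Set (Vn n)) : Prop :=
  ∃ (m : Fin n → ℤ) (α : Fin n → Bool),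
    A = {y : Vn n | ∀ i, y i ∈ Set.Icc ((m i : ℝ) * (2:ℝ) ^ (-(k:ℤ)))
        ((m i : ℝ) * (2:ℝ) ^ (-(k:ℤ)) + (if α i then (2:ℝ) ^ (-(k:ℤ)) else 0))}

/-- `φ` is `M`-bilipschitz on `S`. -/
def BilipschitzOnWith {n : ℕ} (M : ℝ) (φ : Vn n → Vn n) (S : Set (Vn n)) : Prop :=
  ∀ y ∈ S, ∀ z ∈ S, M⁻¹ * dist y z ≤ dist (φ y) (φ z) ∧ dist (φ y) (φ z) ≤ M * dist y z

/-- The grid axiom of Whitney subsets, with constant `M` and scale `t`. -/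
def WhitneyGridWith {n : ℕ} (X Γ : Set (Vn n)) (M t : ℝ) : Prop :=
  1 ≤ M ∧ 0 < t ∧
  ∀ x ∈ Γ, ∃ O : Set (Vn n), IsOpen O ∧
    ∃ φ : Vn n → Vn n, BilipschitzOnWith M φ (ball x (scaleRadiusReal X t x)) ∧
      φ '' ball x (scaleRadiusReal X t x) = O ∧
      ∃ k : ℕ, M⁻¹ * scaleRadiusReal X t x ≤ (2:ℝ) ^ (-(k:ℤ)) ∧
        ∃ S : Set (Set (Vn n)), (∀ A ∈ S, IsDyadicCell n k A) ∧
          φ '' (Γ ∩ ball x (scaleRadiusReal X t x)) = O ∩ ⋃₀ S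

/-- A Whitney subset of `X`, with explicit constants `M`, `t`. -/
def WhitneySubsetWith {n : ℕ} (X Γ : Set (Vn n)) (M t : ℝ) : Prop :=
  RelClosedIn X Γ ∧ LipNbhdRetract X Γ ∧ LocallyDiffeoToCone X Γ ∧ WhitneyGridWith X Γ M t

/-- A Whitney subset of `X`. -/
def WhitneySubset {n : ℕ} (X Γ : Set (Vn n)) : Prop :=
  ∃ M t : ℝ, WhitneySubsetWith X Γ M t

/-! Cells, complexes and charts. -/

/-- The reference cells `∏ [0, α_i]`, `α ∈ {-1,0,1}^n`, of the canonical `n`-complex `E_n`. -/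
def refCell (n : ℕ) (α : Fin n → Fin 3) : Set (Vn n) :=
  {y | ∀ i, y i ∈ Set.Icc (min 0 (![(-1:ℝ), 0, 1] (α i))) (max 0 (![(-1:ℝ), 0, 1] (α i)))}

/-- A similarity of `ℝ^n`. -/
def IsSimilarity {n : ℕ} (f : Vn n → Vn n) : Prop :=
  ∃ r : ℝ, 0 < r ∧ ∀ x y, dist (f x) (f y) = r * dist x y

/-- A cell of `ℝ^n`: a face of a cube, i.e. the image of a reference cell under a similarity. -/
def IsCell (n : ℕ) (A : Set (Vn n)) : Prop :=
  ∃ (f : Vn n → Vn n) (α : Fin n → Fin 3), IsSimilarity f ∧ A = f '' refCell n α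

/-- Interior of a cell relative to its affine span. -/
def cellInt {n : ℕ} (A : Set (Vn n)) : Set (Vn n) :=
  {x | x ∈ A ∧ ∃ ε : ℝ, 0 < ε ∧ ∀ y ∈ (affineSpan ℝ A : Set (Vn n)), dist y x < ε → y ∈ A}

/-- Boundary of a cell relative to its affine span. -/
def cellBry {n : ℕ} (A : Set (Vn n)) : Set (Vn n) := A \ cellInt A

/-- Dimension of a cell: the dimension of its affine span. -/
def cellDim {n : ℕ} (A : Set (Vn n)) : ℕ :=
  Module.finrank ℝ (affineSpan ℝ A).direction

/-- A complex of cells. -/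
def IsComplex {n : ℕ} (K : Set (Set (Vn n))) : Prop :=
  (∀ A ∈ K, IsCell n A) ∧
  (∀ A ∈ K, ∀ B ∈ K, A ≠ B → cellInt A ∩ cellInt B = ∅) ∧
  (∀ x ∈ ⋃₀ K, ∃ U : Set (Vn n), IsOpen U ∧ x ∈ U ∧ {A ∈ K | (A ∩ U).Nonempty}.Finite) ∧
  (∀ A ∈ K, ∃ U : Set (Vn n), IsOpen U ∧ cellInt A ⊆ U ∧
      U ∩ ⋃₀ K ⊆ ⋃ B ∈ {B ∈ K | A ⊆ B}, cellInt B)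

/-- The set `V_A = ⋃ {int B | B ∈ K, A ⊆ B}`. -/
def cellNbhd {n : ℕ} (K : Set (Set (Vn n))) (A : Set (Vn n)) : Set (Vn n) :=
  ⋃ B ∈ {B ∈ K | A ⊆ B}, cellInt B

/-- An `n`-chart: the image of the canonical `n`-complex `E_n` under a similarity. -/
def IsChart {n : ℕ} (K : Set (Set (Vn n))) : Prop :=
  ∃ f : Vn n → Vn n, IsSimilarity f ∧ K = {A | ∃ α : Fin n → Fin 3, A = f '' refCell n α}

/-- A system of `n`-charts. -/
def IsChartSystem {n : ℕ} {ι : Type} (K : ι → Set (Set (Vn n))) : Prop :=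
  (∀ a, IsChart (K a)) ∧
  (∀ A ∈ ⋃ a, K a, ∀ B ∈ ⋃ a, K a, (cellInt A ∩ cellInt B).Nonempty →
      cellInt A ⊆ cellInt B ∨ cellInt B ⊆ cellInt A) ∧
  (∀ x ∈ ⋃ a, ⋃₀ (K a), ∃ U : Set (Vn n), IsOpen U ∧ x ∈ U ∧
      ∃ S : Set (Set (Vn n)), S.Finite ∧ S ⊆ ⋃ a, K a ∧
        ∀ A ∈ ⋃ a, K a, (A ∩ (U ∩ ⋃ a, ⋃₀ (K a))).Nonempty →
          ∃ B ∈ S, cellInt A ⊆ cellInt B)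

/-- The limit of a system of `n`-charts: the collection of its maximal cells. -/
def systemLimit {n : ℕ} {ι : Type} (K : ι → Set (Set (Vn n))) : Set (Set (Vn n)) :=
  {A | A ∈ ⋃ a, K a ∧ ∀ B ∈ ⋃ a, K a, (cellInt A ∩ cellInt B).Nonempty → cellInt B ⊆ cellInt A}

/-- An `n`-complex: the limit of a system of `n`-charts. -/
def IsNComplex {n : ℕ} (K : Set (Set (Vn n))) : Prop :=
  ∃ (ι : Type) (Kα : ι → Set (Set (Vn n))), IsChartSystem Kα ∧ K = systemLimit Kα

/-- A subcomplex of `K`. -/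
def IsSubcomplex {n : ℕ} (K L : Set (Set (Vn n))) : Prop :=
  L ⊆ K ∧ ∀ A ∈ L, ∀ B ∈ K, A ⊆ B → B ∈ L

/-- The rigid open set `U(L)` induced by a set of cells. -/
def rigidOpen {n : ℕ} (L : Set (Set (Vn n))) : Set (Vn n) :=
  ⋃ A ∈ L, cellInt A

/-- `φ` is locally Lipschitz on `S`. -/
def LocallyLipschitzOn {n : ℕ} (S : Set (Vn n)) (φ : Vn n → Vn n) : Prop :=
  ∀ x ∈ S, ∃ U : Set (Vn n), IsOpen U ∧ x ∈ U ∧ ∃ c : ℝ≥0, LipschitzOnWith c φ (U ∩ S)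

/-- The union of interiors of cells of dimension `> d`. -/
def highSkel {n : ℕ} (K : Set (Set (Vn n))) (d : ℕ) : Set (Vn n) :=
  ⋃ A ∈ {A ∈ K | d < cellDim A}, cellInt A

/-- Upper Lebesgue integral (infimum of integrals of measurable majorants). -/
def upperLintegral {α : Type*} [MeasurableSpace α] (μ : Measure α) (s : Set α)
    (f : α → ℝ≥0∞) : ℝ≥0∞ :=
  ⨅ (g : α → ℝ≥0∞) (_ : Measurable g) (_ : ∀ x, f x ≤ g x), ∫⁻ x in s, g x ∂μ

/-- The norm of a linear map restricted to a subset `S`. -/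
def opNormOn {n : ℕ} (u : Vn n →L[ℝ] Vn n) (S : Set (Vn n)) : ℝ :=
  sSup ((fun x => ‖u x‖) '' {x ∈ S | ‖x‖ ≤ 1})


end Paper

/-! Let `ρ : O₀ → Γ` be the `K`-Lipschitz retraction and `h` a `1`-Lipschitz function with
`0 ≤ h ≤ 4ε/(K+1)` that is positive exactly on `U ∩ O₀`. Put `p = id + θ • (ρ - id)`, where the
cutoff `θ` is `1` where `8 dist(·, Γ) ≤ h`, `0` where `4 dist(·, Γ) ≥ h`, and affine in
`dist(·, Γ) / h` in between. Wherever `θ > 0` the displacement `‖ρ x - x‖ ≤ (K+1) dist(x, Γ)` is at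
most `(K+1) h(x)/4`, while `θ` varies at rate at most `12 / h(x)`; the two factors of `h(x)` cancel
in the product rule, so `p` is `(4K+5)`-Lipschitz whatever `U` and `ε` are. -/

theorem abs_div_sub_div_le {a b a' b' c : ℝ} (hb : 0 < b) (hb' : 0 ≤ b') (hc : 0 ≤ c)
    (ha' : |a'| ≤ c * b') : |a / b - a' / b'| ≤ (|a - a'| + c * |b - b'|) / b := by
  have hq : |a' / b'| ≤ c := by
    rw [abs_div, abs_of_nonneg hb']
    exact div_le_of_le_mul₀ hb' hc ha'
  have hsplit : a / b - a' / b' = ((a - a') + a' / b' * (b' - b)) / b := by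
    rcases hb'.eq_or_lt with rfl | hb'
    · obtain rfl : a' = 0 := abs_nonpos_iff.1 (by simpa using ha')
      simp
    · field_simp
      ring
  rw [hsplit, abs_div, abs_of_pos hb, abs_sub_comm b]
  gcongr
  refine (abs_add_le _ _).trans (add_le_add_right ?_ _)
  rw [abs_mul]
  gcongr

section Cutoff

variable {α : Type*} {h D : α → ℝ} {x : α}

/-- Where `h x = 0` the quotient is `0` (junk division), so the cutoff vanishes there. -/
def cutoff (h D : α → ℝ) (x : α) : ℝ :=
  min 1 (max 0 (2 * h x - 8 * D x) / h x)

theorem cutoff_nonneg (hh : 0 ≤ h x) : 0 ≤ cutoff h D x :=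
  le_min zero_le_one (div_nonneg (le_max_left _ _) hh)

theorem cutoff_le_one : cutoff h D x ≤ 1 :=
  min_le_left _ _

theorem cutoff_of_eq_zero (hx : h x = 0) : cutoff h D x = 0 := by
  simp [cutoff, hx]

theorem cutoff_of_le (hx : 0 < h x) (hD : 8 * D x ≤ h x) : cutoff h D x = 1 :=
  min_eq_left <| (one_le_div hx).2 <| le_max_of_le_right (by linarith)

theorem lt_of_cutoff_pos (hx : 0 < cutoff h D x) : 4 * D x < h x := by
  obtain ⟨hφ, -⟩ | ⟨hφ, -⟩ := div_pos_iff.1 (lt_min_iff.1 hx).2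
  · linarith [(lt_max_iff.1 hφ).resolve_left (lt_irrefl 0)]
  · exact absurd hφ (le_max_left _ _).not_gt

theorem abs_cutoff_sub_le [PseudoMetricSpace α] (hh : LipschitzWith 1 h) (hD : LipschitzWith 1 D)
    (hh0 : ∀ x, 0 ≤ h x) (hD0 : ∀ x, 0 ≤ D x) (hx : 0 < h x) (y : α) :
    |cutoff h D x - cutoff h D y| ≤ 12 * dist x y / h x := by
  have hhxy : |h x - h y| ≤ dist x y := by simpa [Real.dist_eq] using hh.dist_le_mul x y
  have hDxy : |D x - D y| ≤ dist x y := by simpa [Real.dist_eq] using hD.dist_le_mul x y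
  have hφxy : |max 0 (2 * h x - 8 * D x) - max 0 (2 * h y - 8 * D y)| ≤ 10 * dist x y := by
    rw [max_comm 0, max_comm 0]
    refine (abs_max_sub_max_le_abs _ _ _).trans ?_
    rw [abs_le] at hhxy hDxy ⊢
    constructor <;> linarith
  have hφy : |max 0 (2 * h y - 8 * D y)| ≤ 2 * h y := by
    rw [abs_of_nonneg (le_max_left _ _)]
    exact max_le (by linarith [hh0 y]) (by linarith [hD0 y])
  calc |cutoff h D x - cutoff h D y|
      ≤ |max 0 (2 * h x - 8 * D x) / h x - max 0 (2 * h y - 8 * D y) / h y| := by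
        simpa [cutoff] using abs_min_sub_min_le_max 1 (max 0 (2 * h x - 8 * D x) / h x) 1
          (max 0 (2 * h y - 8 * D y) / h y)
    _ ≤ (10 * dist x y + 2 * dist x y) / h x := by
        refine (abs_div_sub_div_le hx (hh0 y) zero_le_two hφy).trans ?_
        gcongr
    _ = 12 * dist x y / h x := by ring

end Cutoff

theorem LipschitzOnWith.dist_le_mul_infDist {α : Type*} [PseudoMetricSpace α] {ρ : α → α}
    {K : ℝ≥0} {O Γ : Set α} (hρ : LipschitzOnWith K ρ O) (hΓO : Γ ⊆ O)
    (hρΓ : ∀ y ∈ Γ, ρ y = y) (hΓ : Γ.Nonempty) {x : α} (hx : x ∈ O) :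
    dist (ρ x) x ≤ (K + 1) * infDist x Γ := by
  rw [← div_le_iff₀' (by positivity)]
  refine (le_infDist hΓ).2 fun y hy => ?_
  rw [div_le_iff₀' (by positivity)]
  calc dist (ρ x) x ≤ dist (ρ x) (ρ y) + dist (ρ y) x := dist_triangle _ _ _
    _ ≤ K * dist x y + dist x y := by
        gcongr
        · exact hρ.dist_le_mul x hx y (hΓO hy)
        · rw [hρΓ y hy, dist_comm]
    _ = (K + 1) * dist x y := by ring

theorem IsOpen.exists_lipschitzWith_pos_iff_mem {α : Type*} [PseudoMetricSpace α] {W : Set α}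
    (hW : IsOpen W) {ε : ℝ} (hε : 0 < ε) :
    ∃ h : α → ℝ, LipschitzWith 1 h ∧ (∀ x, 0 ≤ h x ∧ h x ≤ ε) ∧ ∀ x, 0 < h x ↔ x ∈ W := by
  rcases Wᶜ.eq_empty_or_nonempty with hc | hc
  · refine ⟨fun _ => ε, LipschitzWith.const' ε, fun _ => ⟨hε.le, le_rfl⟩, fun x => ?_⟩
    simp [compl_empty_iff.1 hc, hε]
  · refine ⟨fun x => min ε (infDist x Wᶜ), (lipschitz_infDist_pt Wᶜ).const_min ε,
      fun x => ⟨le_min hε.le infDist_nonneg, min_le_left _ _⟩, fun x => ?_⟩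
    rw [lt_min_iff, ← hW.isClosed_compl.notMem_iff_infDist_pos hc]
    simp [hε]

theorem lipschitzWith_smul_of_oscillation_le {α E : Type*} [PseudoMetricSpace α] [SeminormedAddCommGroup E]
    [NormedSpace ℝ E] {θ : α → ℝ} {v : α → E} {M L : ℝ≥0}
    (hθ0 : ∀ x, 0 ≤ θ x) (hθ1 : ∀ x, θ x ≤ 1)
    (hosc : ∀ x y, 0 < θ x → |θ x - θ y| * ‖v x‖ ≤ M * dist x y)
    (hv : ∀ x y, 0 < θ x → 0 < θ y → ‖v x - v y‖ ≤ L * dist x y) :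
    LipschitzWith (M + L) fun x => θ x • v x := by
  have key : ∀ x y, θ y ≤ θ x → ‖θ x • v x - θ y • v y‖ ≤ (M + L) * dist x y := by
    intro x y hxy
    rcases (hθ0 x).eq_or_lt with hx | hx
    · have hy : θ y = 0 := le_antisymm (hx ▸ hxy) (hθ0 y)
      simp only [← hx, hy, zero_smul, sub_zero, norm_zero]
      positivity
    have hvy : ‖θ y • (v x - v y)‖ ≤ L * dist x y := by
      rcases (hθ0 y).eq_or_lt with hy | hy
      · simp only [← hy, zero_smul, norm_zero]
        positivity
      rw [norm_smul, Real.norm_of_nonneg (hθ0 y)]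
      exact (mul_le_of_le_one_left (norm_nonneg _) (hθ1 y)).trans (hv x y hx hy)
    calc ‖θ x • v x - θ y • v y‖ = ‖(θ x - θ y) • v x + θ y • (v x - v y)‖ := by
          congr 1; module
      _ ≤ |θ x - θ y| * ‖v x‖ + L * dist x y := by
          refine (norm_add_le _ _).trans (add_le_add ?_ hvy)
          rw [norm_smul, Real.norm_eq_abs]
      _ ≤ (M + L) * dist x y := by
          linarith [hosc x y hx]
  refine LipschitzWith.of_dist_le_mul fun x y => ?_
  rw [dist_eq_norm]
  rcases le_total (θ y) (θ x) with hxy | hyx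
  · exact key x y hxy
  · rw [norm_sub_rev, dist_comm]
    exact key y x hyx

section LocalizedRetraction

variable {E : Type*} [NormedAddCommGroup E] {O₀ Γ : Set E} {ρ : E → E} {K : ℝ≥0} {h : E → ℝ}
  {x : E}

theorem norm_sub_le_of_cutoff_pos (hρ : LipschitzOnWith K ρ O₀) (hΓO₀ : Γ ⊆ O₀)
    (hρΓ : ρ '' O₀ ⊆ Γ) (hρid : ∀ y ∈ Γ, ρ y = y) (hhO₀ : ∀ y, 0 < h y → y ∈ O₀)
    (hx : 0 < cutoff h (infDist · Γ) x) :
    0 < h x ∧ x ∈ O₀ ∧ ‖ρ x - x‖ ≤ (K + 1) * h x / 4 := by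
  have hDh : 4 * infDist x Γ < h x := lt_of_cutoff_pos hx
  have hhx : 0 < h x := by linarith [infDist_nonneg (x := x) (s := Γ)]
  have hxO₀ := hhO₀ x hhx
  refine ⟨hhx, hxO₀, ?_⟩
  rw [← dist_eq_norm]
  calc dist (ρ x) x ≤ (K + 1) * infDist x Γ :=
        hρ.dist_le_mul_infDist hΓO₀ hρid ⟨ρ x, hρΓ (mem_image_of_mem ρ hxO₀)⟩ hxO₀
    _ ≤ (K + 1) * h x / 4 := by rw [mul_div_assoc]; gcongr; linarith

variable [NormedSpace ℝ E]

def localizedRetraction (ρ : E → E) (Γ : Set E) (h : E → ℝ) (x : E) : E :=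
  x + cutoff h (infDist · Γ) x • (ρ x - x)

theorem lipschitzWith_localizedRetraction (hρ : LipschitzOnWith K ρ O₀) (hΓO₀ : Γ ⊆ O₀)
    (hρΓ : ρ '' O₀ ⊆ Γ) (hρid : ∀ y ∈ Γ, ρ y = y) (hh : LipschitzWith 1 h)
    (hh0 : ∀ y, 0 ≤ h y) (hhO₀ : ∀ y, 0 < h y → y ∈ O₀) :
    LipschitzWith (4 * K + 5) (localizedRetraction ρ Γ h) := by
  have hg : LipschitzWith (3 * (K + 1) + (K + 1))
      fun x => cutoff h (infDist · Γ) x • (ρ x - x) := by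
    refine lipschitzWith_smul_of_oscillation_le (fun x => cutoff_nonneg (hh0 x))
      (fun x => cutoff_le_one) (fun x y hx => ?_) (fun x y hx hy => ?_)
    · obtain ⟨hhx, -, hv⟩ := norm_sub_le_of_cutoff_pos hρ hΓO₀ hρΓ hρid hhO₀ hx
      calc |cutoff h (infDist · Γ) x - cutoff h (infDist · Γ) y| * ‖ρ x - x‖
          ≤ 12 * dist x y / h x * ((K + 1) * h x / 4) :=
            mul_le_mul (abs_cutoff_sub_le hh (lipschitz_infDist_pt Γ) hh0
              (fun _ => infDist_nonneg) hhx y) hv (norm_nonneg _) (by positivity)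
        _ = ↑(3 * (K + 1)) * dist x y := by push_cast; field_simp; ring
    · obtain ⟨-, hxO₀, -⟩ := norm_sub_le_of_cutoff_pos hρ hΓO₀ hρΓ hρid hhO₀ hx
      obtain ⟨-, hyO₀, -⟩ := norm_sub_le_of_cutoff_pos hρ hΓO₀ hρΓ hρid hhO₀ hy
      calc ‖ρ x - x - (ρ y - y)‖ = ‖(ρ x - ρ y) - (x - y)‖ := by congr 1; abel
        _ ≤ dist (ρ x) (ρ y) + dist x y := by
            rw [dist_eq_norm, dist_eq_norm]; exact norm_sub_le _ _
        _ ≤ K * dist x y + dist x y := by gcongr; exact hρ.dist_le_mul x hxO₀ y hyO₀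
        _ = ↑(K + 1) * dist x y := by push_cast; ring
  rw [show 4 * K + 5 = 1 + (3 * (K + 1) + (K + 1)) by ring]
  exact LipschitzWith.id.add hg

theorem dist_localizedRetraction_le (hρ : LipschitzOnWith K ρ O₀) (hΓO₀ : Γ ⊆ O₀)
    (hρΓ : ρ '' O₀ ⊆ Γ) (hρid : ∀ y ∈ Γ, ρ y = y) (hh0 : 0 ≤ h x)
    (hhO₀ : ∀ y, 0 < h y → y ∈ O₀) :
    dist (localizedRetraction ρ Γ h x) x ≤ (K + 1) * h x / 4 := by
  rw [localizedRetraction, dist_eq_norm, add_sub_cancel_left, norm_smul,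
    Real.norm_of_nonneg (cutoff_nonneg hh0)]
  rcases (cutoff_nonneg hh0 (D := (infDist · Γ))).eq_or_lt with hx | hx
  · rw [← hx, zero_mul]
    positivity
  obtain ⟨-, -, hv⟩ := norm_sub_le_of_cutoff_pos hρ hΓO₀ hρΓ hρid hhO₀ hx
  exact (mul_le_of_le_one_left (norm_nonneg _) cutoff_le_one).trans hv

theorem localizedRetraction_of_le (hx : 0 < h x) (hD : 8 * infDist x Γ ≤ h x) :
    localizedRetraction ρ Γ h x = ρ x := by
  simp [localizedRetraction, cutoff_of_le (D := (infDist · Γ)) hx hD]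

theorem localizedRetraction_of_mem (hρid : ∀ y ∈ Γ, ρ y = y) (hx : x ∈ Γ) :
    localizedRetraction ρ Γ h x = x := by
  simp [localizedRetraction, hρid x hx]

theorem localizedRetraction_of_eq_zero (hx : h x = 0) : localizedRetraction ρ Γ h x = x := by
  simp [localizedRetraction, cutoff_of_eq_zero hx]

end LocalizedRetraction

namespace Paper

theorem localized_retraction_general (n : ℕ) (X : Set (Vn n))
    (Γ : Set (Vn n)) (hΓ : LipNbhdRetract X Γ) :
    ∃ C : ℝ≥0, ∀ U : Set (Vn n), IsOpen U → U ⊆ X → ∀ ε : ℝ, 0 < ε →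
      ∃ (p : Vn n → Vn n) (O : Set (Vn n)),
        LipschitzWith C p ∧
        IsOpen O ∧ Γ ∩ U ⊆ O ∧ O ⊆ U ∧
        (∀ x, dist (p x) x ≤ ε) ∧
        p '' O ⊆ Γ ∧
        (∀ x ∈ Γ ∪ Uᶜ, p x = x) := by
  obtain ⟨O₀, hO₀, hΓO₀, -, ρ, ⟨K, hρ⟩, hρΓ, hρid⟩ := hΓ
  refine ⟨4 * K + 5, fun U hU _ ε hε => ?_⟩
  obtain ⟨h, hh, hh0, hpos⟩ := (hU.inter hO₀).exists_lipschitzWith_pos_iff_mem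
    (by positivity : 0 < 4 * ε / (K + 1))
  have hhO₀ : ∀ y, 0 < h y → y ∈ O₀ := fun y hy => ((hpos y).1 hy).2
  have hpos_of_lt : ∀ y, 8 * infDist y Γ < h y → 0 < h y := fun y hy => by
    linarith [infDist_nonneg (x := y) (s := Γ)]
  refine ⟨localizedRetraction ρ Γ h, {y | 8 * infDist y Γ < h y},
    lipschitzWith_localizedRetraction hρ hΓO₀ hρΓ hρid hh (fun y => (hh0 y).1) hhO₀,
    isOpen_lt (by fun_prop) hh.continuous, ?_, fun y hy => ((hpos y).1 (hpos_of_lt y hy)).1,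
    fun y => ?_, ?_, ?_⟩
  · rintro y ⟨hyΓ, hyU⟩
    show 8 * infDist y Γ < h y
    rw [infDist_zero_of_mem hyΓ, mul_zero]
    exact (hpos y).2 ⟨hyU, hΓO₀ hyΓ⟩
  · calc dist (localizedRetraction ρ Γ h y) y ≤ (K + 1) * h y / 4 :=
          dist_localizedRetraction_le hρ hΓO₀ hρΓ hρid (hh0 y).1 hhO₀
      _ ≤ (K + 1) * (4 * ε / (K + 1)) / 4 := by gcongr; exact (hh0 y).2
      _ = ε := by field_simp
  · rintro - ⟨y, hy, rfl⟩
    rw [localizedRetraction_of_le (hpos_of_lt y hy) hy.le]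
    exact hρΓ (mem_image_of_mem ρ (hhO₀ y (hpos_of_lt y hy)))
  · rintro y (hy | hy)
    · exact localizedRetraction_of_mem hρid hy
    · exact localizedRetraction_of_eq_zero
        (le_antisymm (not_lt.1 fun hy' => hy ((hpos y).1 hy').1) (hh0 y).1)

/-- **Localization of a Lipschitz retraction.** -/
theorem localized_retraction (n : ℕ) (X : Set (Vn n)) (hX : IsOpen X)
    (Γ : Set (Vn n)) (hΓc : RelClosedIn X Γ) (hΓ : LipNbhdRetract X Γ) :
    ∃ C : ℝ≥0, ∀ U : Set (Vn n), IsOpen U → U ⊆ X → ∀ ε : ℝ, 0 < ε →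
      ∃ (p : Vn n → Vn n) (O : Set (Vn n)),
        LipschitzWith C p ∧
        IsOpen O ∧ Γ ∩ U ⊆ O ∧ O ⊆ U ∧
        (∀ x, dist (p x) x ≤ ε) ∧
        p '' O ⊆ Γ ∧
        (∀ x ∈ Γ ∪ Uᶜ, p x = x) :=
  localized_retraction_general n X Γ hΓ

end Paper
end
end

section
/- Local structure of the Grassmannian. Let 0 ≤ d ≤ n and V, W ∈ G(d,n). Then: (i) d(V,W) ≤ 1, with equality if and only if V ∩ W^⊥ ≠ {0} or V^⊥ ∩ W ≠ {0}; (ii) if d(V,W) < 1 then for every x ∈ W, |x| ≤ (1 − d(V,W)²)^{-1/2} |p_V(x)|; hence p_V restricted to W is a linear isomorphism p_* : W → V, and W = {x + φ(x) : x ∈ V} where φ : V → V^⊥ is the linear map x ↦ p_*^{-1}(x) − x; (iii) if W = {x + φ(x) : x ∈ V} for some linear map φ : V → V^⊥, then d(V,W) = ‖φ‖ / √(1 + ‖φ‖²), where ‖φ‖ is the operator norm of φ. -/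
open MeasureTheory Metric Set Filter
open scoped ENNReal NNReal Topology BigOperators

noncomputable section

namespace Paper

/-! Write `P`, `Q` for the orthogonal projections onto `V`, `W` and `Pᗮ`, `Qᗮ` for those onto
the complements. Then `P - Q = P Qᗮ - Pᗮ Q`, whose two terms take values in `V` and `Vᗮ`, so
`‖(P - Q) y‖² = ‖P Qᗮ y‖² + ‖Pᗮ Q y‖² ≤ ‖Qᗮ y‖² + ‖Q y‖² = ‖y‖²`, with equality only if
`Qᗮ y ∈ V ⊓ Wᗮ` and `Q y ∈ Vᗮ ⊓ W`; since the operator norm is attained, this gives (i).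
For `x ∈ W` one has `‖x - P x‖ = ‖(P - Q) x‖ ≤ d(V, W) ‖x‖`, which is (ii). Then `P|_W` and,
symmetrically, `Q|_V` are injective, so the dimensions agree and `P|_W` is bijective.
If `W` is the graph of `φ`, the same splitting together with `‖Pᗮ w‖ ≤ ‖φ‖ ‖P w‖` on `W` and
`‖P u‖ ≤ ‖φ‖ ‖Pᗮ u‖` on `Wᗮ` gives `d(V, W) ≤ ‖φ‖ / √(1 + ‖φ‖²)`, and the reverse inequality comes
from `(P - Q) (x + φ x) = -φ x`. -/

section OperatorNorm

variable {E F : Type*} [NormedAddCommGroup E] [NormedSpace ℝ E] [NormedAddCommGroup F]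
  [NormedSpace ℝ F]

theorem one_le_opNorm_of_norm_apply_eq {T : E →L[ℝ] F} {x : E} (hx : x ≠ 0)
    (h : ‖T x‖ = ‖x‖) : 1 ≤ ‖T‖ := by
  simpa [h, div_self (norm_ne_zero_iff.2 hx)] using T.ratio_le_opNorm x

theorem exists_norm_le_one_and_norm_apply_eq_opNorm [ProperSpace E] (T : E →L[ℝ] F) :
    ∃ x : E, ‖x‖ ≤ 1 ∧ ‖T x‖ = ‖T‖ := by
  obtain ⟨x, hx, hmax⟩ := (isCompact_closedBall (0 : E) 1).exists_sSup_image_eq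
    (nonempty_closedBall.2 zero_le_one) (by fun_prop : ContinuousOn (fun x => ‖T x‖) _)
  exact ⟨x, mem_closedBall_zero_iff.1 hx, by rw [← hmax, T.sSup_unitClosedBall_eq_norm]⟩

end OperatorNorm

theorem mul_sqrt_le_iff {a b c : ℝ} (ha : 0 ≤ a) (hb : 0 ≤ b) (hc : 0 ≤ c) :
    a * √c ≤ b ↔ a ^ 2 * c ≤ b ^ 2 := by
  rw [← pow_le_pow_iff_left₀ (by positivity) hb two_ne_zero, mul_pow, Real.sq_sqrt hc]

section OrthogonalProjection

variable {E : Type*} [NormedAddCommGroup E] [InnerProductSpace ℝ E]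
  {V W : Submodule ℝ E} [V.HasOrthogonalProjection]

theorem inner_starProjection_right_of_mem {K : Submodule ℝ E} [K.HasOrthogonalProjection]
    {v : E} (hv : v ∈ K) (u : E) : inner ℝ v (K.starProjection u) = inner ℝ v u := by
  rw [← sub_eq_zero, ← inner_sub_right, ← neg_sub, inner_neg_right, neg_eq_zero]
  exact K.inner_right_of_mem_orthogonal hv (K.sub_starProjection_mem_orthogonal u)

theorem exists_eq_graph_of_bijective [FiniteDimensional ℝ V]
    (h : Function.Bijective ((V.orthogonalProjectionOnto : E →ₗ[ℝ] V) ∘ₗ W.subtype)) :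
    ∃ φ : V →L[ℝ] Vᗮ, (W : Set E) = {y | ∃ x : V, y = (x : E) + (φ x : E)} := by
  set e := LinearEquiv.ofBijective _ h
  set φ := LinearMap.toContinuousLinearMap
    ((Vᗮ.orthogonalProjectionOnto : E →ₗ[ℝ] Vᗮ) ∘ₗ W.subtype ∘ₗ e.symm.toLinearMap)
  have hgraph : ∀ x : V, (x : E) + (φ x : E) = e.symm x := fun x => by
    have hPe : V.starProjection (e.symm x) = x := congrArg Subtype.val (e.apply_symm_apply x)
    rw [← V.starProjection_add_starProjection_orthogonal (e.symm x), hPe]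
    rfl
  refine ⟨φ, Set.ext fun y => ⟨fun hy => ⟨e ⟨y, hy⟩, ?_⟩, ?_⟩⟩
  · rw [hgraph, e.symm_apply_apply]
  · rintro ⟨x, rfl⟩
    rw [hgraph]
    exact (e.symm x).2

theorem norm_orthogonal_starProjection_le_of_eq_graph {φ : V →L[ℝ] Vᗮ}
    (hφ : (W : Set E) = {y | ∃ x : V, y = (x : E) + (φ x : E)}) {w : E} (hw : w ∈ W) :
    ‖Vᗮ.starProjection w‖ ≤ ‖φ‖ * ‖V.starProjection w‖ := by
  obtain ⟨x, rfl⟩ : ∃ x : V, w = (x : E) + (φ x : E) := by rwa [← SetLike.mem_coe, hφ] at hw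
  rw [Submodule.eq_starProjection_of_mem_orthogonal' x.2 (φ x).2 rfl,
    Submodule.eq_starProjection_of_mem_orthogonal' (φ x).2 (V.le_orthogonal_orthogonal x.2)
      (add_comm _ _)]
  exact φ.le_opNorm x

theorem norm_starProjection_le_of_eq_graph {φ : V →L[ℝ] Vᗮ}
    (hφ : (W : Set E) = {y | ∃ x : V, y = (x : E) + (φ x : E)}) {u : E} (hu : u ∈ Wᗮ) :
    ‖V.starProjection u‖ ≤ ‖φ‖ * ‖Vᗮ.starProjection u‖ := by
  -- `u ⊥ x + φ x` for `x = P u` gives `‖P u‖² = -⟪φ x, Pᗮ u⟫`.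
  set x : V := V.orthogonalProjectionOnto u
  have hx : (x : E) = V.starProjection u := rfl
  have hxW : (x : E) + (φ x : E) ∈ W := by rw [← SetLike.mem_coe, hφ]; exact ⟨x, rfl⟩
  have horth : inner ℝ ((x : E) + (φ x : E)) u = 0 :=
    Submodule.inner_right_of_mem_orthogonal hxW hu
  rw [inner_add_left, ← inner_starProjection_right_of_mem x.2,
    ← inner_starProjection_right_of_mem (φ x).2, hx] at horth
  have hsq : ‖V.starProjection u‖ * ‖V.starProjection u‖ ≤
      ‖V.starProjection u‖ * (‖φ‖ * ‖Vᗮ.starProjection u‖) := by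
    calc ‖V.starProjection u‖ * ‖V.starProjection u‖
        = -inner ℝ (φ x : E) (Vᗮ.starProjection u) := by
          rw [← real_inner_self_eq_norm_mul_norm]; linarith
      _ ≤ ‖(φ x : E)‖ * ‖Vᗮ.starProjection u‖ :=
          (neg_le_abs _).trans (abs_real_inner_le_norm _ _)
      _ ≤ ‖φ‖ * ‖V.starProjection u‖ * ‖Vᗮ.starProjection u‖ := by
          gcongr; exact φ.le_opNorm x
      _ = ‖V.starProjection u‖ * (‖φ‖ * ‖Vᗮ.starProjection u‖) := by ring
  nlinarith [norm_nonneg (V.starProjection u), mul_nonneg φ.opNorm_nonneg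
    (norm_nonneg (Vᗮ.starProjection u))]

variable [W.HasOrthogonalProjection]

theorem starProjection_sub_starProjection_apply (y : E) :
    (V.starProjection - W.starProjection) y =
      V.starProjection (Wᗮ.starProjection y) - Vᗮ.starProjection (W.starProjection y) := by
  simp only [sub_apply, Submodule.starProjection_orthogonal_val, map_sub]
  abel

theorem norm_sq_starProjection_sub_starProjection_apply (y : E) :
    ‖(V.starProjection - W.starProjection) y‖ ^ 2 =
      ‖V.starProjection (Wᗮ.starProjection y)‖ ^ 2 +
        ‖Vᗮ.starProjection (W.starProjection y)‖ ^ 2 := by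
  rw [starProjection_sub_starProjection_apply, norm_sub_sq_real,
    Submodule.inner_right_of_mem_orthogonal (V.starProjection_apply_mem _)
      (Vᗮ.starProjection_apply_mem _)]
  ring

theorem norm_starProjection_sub_starProjection_apply_le (y : E) :
    ‖(V.starProjection - W.starProjection) y‖ ≤ ‖y‖ := by
  rw [← pow_le_pow_iff_left₀ (norm_nonneg _) (norm_nonneg _) two_ne_zero,
    norm_sq_starProjection_sub_starProjection_apply, W.norm_sq_eq_add_norm_sq_starProjection y]
  have h₁ := V.norm_starProjection_apply_le (Wᗮ.starProjection y)
  have h₂ := Vᗮ.norm_starProjection_apply_le (W.starProjection y)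
  nlinarith [norm_nonneg (V.starProjection (Wᗮ.starProjection y)),
    norm_nonneg (Vᗮ.starProjection (W.starProjection y))]

theorem norm_starProjection_sub_starProjection_le_one :
    ‖V.starProjection - W.starProjection‖ ≤ 1 :=
  ContinuousLinearMap.opNorm_le_bound _ zero_le_one fun y => by
    simpa using norm_starProjection_sub_starProjection_apply_le y

theorem mem_of_norm_starProjection_sub_starProjection_apply_eq {y : E}
    (h : ‖(V.starProjection - W.starProjection) y‖ = ‖y‖) :
    Wᗮ.starProjection y ∈ V ∧ W.starProjection y ∈ Vᗮ := by
  have hsq := norm_sq_starProjection_sub_starProjection_apply (V := V) (W := W) y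
  rw [h, W.norm_sq_eq_add_norm_sq_starProjection y] at hsq
  have h₁ := V.norm_starProjection_apply_le (Wᗮ.starProjection y)
  have h₂ := Vᗮ.norm_starProjection_apply_le (W.starProjection y)
  rw [V.mem_iff_norm_starProjection, Vᗮ.mem_iff_norm_starProjection]
  constructor <;> nlinarith [norm_nonneg (V.starProjection (Wᗮ.starProjection y)),
    norm_nonneg (Vᗮ.starProjection (W.starProjection y))]

theorem one_le_norm_starProjection_sub_starProjection (h : V ⊓ Wᗮ ≠ ⊥ ∨ Vᗮ ⊓ W ≠ ⊥) :
    1 ≤ ‖V.starProjection - W.starProjection‖ := by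
  rcases h with h | h <;> obtain ⟨x, hx, hx₀⟩ := (Submodule.ne_bot_iff _).1 h <;>
    rw [Submodule.mem_inf] at hx <;> refine one_le_opNorm_of_norm_apply_eq hx₀ ?_
  · rw [sub_apply, V.starProjection_eq_self_iff.2 hx.1, W.starProjection_apply_eq_zero_iff.2 hx.2,
      sub_zero]
  · rw [sub_apply, W.starProjection_eq_self_iff.2 hx.2, V.starProjection_apply_eq_zero_iff.2 hx.1,
      zero_sub, norm_neg]

theorem norm_starProjection_sub_starProjection_eq_one_iff [FiniteDimensional ℝ E] :
    ‖V.starProjection - W.starProjection‖ = 1 ↔ V ⊓ Wᗮ ≠ ⊥ ∨ Vᗮ ⊓ W ≠ ⊥ := by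
  refine ⟨fun h => ?_, fun h => norm_starProjection_sub_starProjection_le_one.antisymm
    (one_le_norm_starProjection_sub_starProjection h)⟩
  obtain ⟨x, hx, hTx⟩ :=
    exists_norm_le_one_and_norm_apply_eq_opNorm (V.starProjection - W.starProjection)
  have hTx' : ‖(V.starProjection - W.starProjection) x‖ = ‖x‖ :=
    le_antisymm (norm_starProjection_sub_starProjection_apply_le x) (by rw [hTx, h]; exact hx)
  obtain ⟨h₁, h₂⟩ := mem_of_norm_starProjection_sub_starProjection_apply_eq hTx'
  by_contra! hbot
  have hx₁ : Wᗮ.starProjection x = 0 := by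
    simpa [hbot.1] using Submodule.mem_inf.2 ⟨h₁, Wᗮ.starProjection_apply_mem x⟩
  have hx₂ : W.starProjection x = 0 := by
    simpa [hbot.2] using Submodule.mem_inf.2 ⟨h₂, W.starProjection_apply_mem x⟩
  have hx₀ : x = 0 := by
    rw [← W.starProjection_add_starProjection_orthogonal x, hx₁, hx₂, add_zero]
  simp [hx₀, h] at hTx

theorem norm_sub_starProjection_le_of_mem {x : E} (hx : x ∈ W) :
    ‖x - V.starProjection x‖ ≤ ‖V.starProjection - W.starProjection‖ * ‖x‖ := by
  simpa [W.starProjection_eq_self_iff.2 hx, norm_sub_rev] using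
    (V.starProjection - W.starProjection).le_opNorm x

theorem norm_le_of_norm_sub_lt_one (h : ‖V.starProjection - W.starProjection‖ < 1) {x : E}
    (hx : x ∈ W) :
    ‖x‖ ≤ (√(1 - ‖V.starProjection - W.starProjection‖ ^ 2))⁻¹ * ‖V.starProjection x‖ := by
  set δ := ‖V.starProjection - W.starProjection‖
  have hδ₀ : 0 ≤ δ := norm_nonneg _
  have hδ₁ : 0 < 1 - δ ^ 2 := by nlinarith
  have hsplit := V.norm_sq_eq_add_norm_sq_starProjection x
  rw [Submodule.starProjection_orthogonal_val] at hsplit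
  have hdist := pow_le_pow_left₀ (norm_nonneg _) (norm_sub_starProjection_le_of_mem (V := V) hx) 2
  rw [inv_mul_eq_div, le_div_iff₀ (Real.sqrt_pos.2 hδ₁),
    mul_sqrt_le_iff (norm_nonneg _) (norm_nonneg _) hδ₁.le]
  rw [mul_pow] at hdist
  linarith

theorem injective_orthogonalProjectionOnto_of_norm_sub_lt_one
    (h : ‖V.starProjection - W.starProjection‖ < 1) :
    Function.Injective ((V.orthogonalProjectionOnto : E →ₗ[ℝ] V) ∘ₗ W.subtype) := by
  refine (injective_iff_map_eq_zero _).2 fun x hx => ?_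
  have hPx : V.starProjection x = 0 := congrArg Subtype.val hx
  have hle := norm_le_of_norm_sub_lt_one h x.2
  rw [hPx, norm_zero, mul_zero] at hle
  exact Subtype.ext (norm_le_zero_iff.1 hle)

theorem bijective_orthogonalProjectionOnto_of_norm_sub_lt_one [FiniteDimensional ℝ E]
    (h : ‖V.starProjection - W.starProjection‖ < 1) :
    Function.Bijective ((V.orthogonalProjectionOnto : E →ₗ[ℝ] V) ∘ₗ W.subtype) := by
  have hinj := injective_orthogonalProjectionOnto_of_norm_sub_lt_one h
  have hinj' := injective_orthogonalProjectionOnto_of_norm_sub_lt_one (V := W) (W := V)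
    (by rwa [norm_sub_rev])
  have hrank : Module.finrank ℝ W = Module.finrank ℝ V :=
    (LinearMap.finrank_le_finrank_of_injective hinj).antisymm
      (LinearMap.finrank_le_finrank_of_injective hinj')
  exact ⟨hinj, (LinearMap.injective_iff_surjective_of_finrank_eq_finrank hrank).1 hinj⟩

theorem norm_sq_starProjection_sub_starProjection_apply_mul_le_of_eq_graph {φ : V →L[ℝ] Vᗮ}
    (hφ : (W : Set E) = {y | ∃ x : V, y = (x : E) + (φ x : E)}) (y : E) :
    ‖(V.starProjection - W.starProjection) y‖ ^ 2 * (1 + ‖φ‖ ^ 2) ≤ ‖φ‖ ^ 2 * ‖y‖ ^ 2 := by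
  have key : ∀ {a b : ℝ}, 0 ≤ a → a ≤ ‖φ‖ * b →
      a ^ 2 * (1 + ‖φ‖ ^ 2) ≤ ‖φ‖ ^ 2 * (a ^ 2 + b ^ 2) :=
    fun ha h => by nlinarith [mul_self_le_mul_self ha h]
  have hu := key (norm_nonneg _)
    (norm_starProjection_le_of_eq_graph hφ (Wᗮ.starProjection_apply_mem y))
  have hw := key (norm_nonneg _)
    (norm_orthogonal_starProjection_le_of_eq_graph hφ (W.starProjection_apply_mem y))
  rw [← V.norm_sq_eq_add_norm_sq_starProjection] at hu
  rw [add_comm (‖Vᗮ.starProjection _‖ ^ 2), ← V.norm_sq_eq_add_norm_sq_starProjection] at hw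
  rw [norm_sq_starProjection_sub_starProjection_apply, W.norm_sq_eq_add_norm_sq_starProjection y]
  linarith

theorem norm_starProjection_sub_starProjection_le_of_eq_graph {φ : V →L[ℝ] Vᗮ}
    (hφ : (W : Set E) = {y | ∃ x : V, y = (x : E) + (φ x : E)}) :
    ‖V.starProjection - W.starProjection‖ ≤ ‖φ‖ / √(1 + ‖φ‖ ^ 2) :=
  ContinuousLinearMap.opNorm_le_bound _ (by positivity) fun y => by
    rw [div_mul_eq_mul_div, le_div_iff₀ (by positivity),
      mul_sqrt_le_iff (norm_nonneg _) (by positivity) (by positivity), mul_pow]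
    exact norm_sq_starProjection_sub_starProjection_apply_mul_le_of_eq_graph hφ y

theorem norm_sq_apply_mul_le_of_eq_graph {φ : V →L[ℝ] Vᗮ}
    (hφ : (W : Set E) = {y | ∃ x : V, y = (x : E) + (φ x : E)}) (x : V) :
    ‖φ x‖ ^ 2 * (1 - ‖V.starProjection - W.starProjection‖ ^ 2) ≤
      ‖V.starProjection - W.starProjection‖ ^ 2 * ‖x‖ ^ 2 := by
  have hxW : (x : E) + (φ x : E) ∈ W := by rw [← SetLike.mem_coe, hφ]; exact ⟨x, rfl⟩
  have happ : (V.starProjection - W.starProjection) ((x : E) + (φ x : E)) = -(φ x : E) := by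
    rw [sub_apply, W.starProjection_eq_self_iff.2 hxW,
      Submodule.eq_starProjection_of_mem_orthogonal' x.2 (φ x).2 rfl]
    abel
  have hpyth : ‖(x : E) + (φ x : E)‖ ^ 2 = ‖(x : E)‖ ^ 2 + ‖(φ x : E)‖ ^ 2 := by
    rw [norm_add_sq_real, Submodule.inner_right_of_mem_orthogonal x.2 (φ x).2]
    ring
  have hle := (V.starProjection - W.starProjection).le_opNorm ((x : E) + (φ x : E))
  rw [happ, norm_neg] at hle
  have hsq := pow_le_pow_left₀ (norm_nonneg _) hle 2
  rw [mul_pow, hpyth] at hsq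
  change ‖(φ x : E)‖ ^ 2 * _ ≤ _ * ‖(x : E)‖ ^ 2
  linarith

theorem le_norm_starProjection_sub_starProjection_of_eq_graph {φ : V →L[ℝ] Vᗮ}
    (hφ : (W : Set E) = {y | ∃ x : V, y = (x : E) + (φ x : E)}) :
    ‖φ‖ / √(1 + ‖φ‖ ^ 2) ≤ ‖V.starProjection - W.starProjection‖ := by
  set δ := ‖V.starProjection - W.starProjection‖
  have hδ₀ : 0 ≤ δ := norm_nonneg _
  have hδ₁ : 0 < 1 - δ ^ 2 := by
    have : ‖φ‖ / √(1 + ‖φ‖ ^ 2) < 1 := by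
      rw [div_lt_one (by positivity), Real.lt_sqrt φ.opNorm_nonneg]
      linarith
    nlinarith [norm_starProjection_sub_starProjection_le_of_eq_graph hφ]
  have ht : ‖φ‖ * √(1 - δ ^ 2) ≤ δ := by
    rw [← le_div_iff₀ (Real.sqrt_pos.2 hδ₁)]
    refine φ.opNorm_le_bound (by positivity) fun x => ?_
    rw [div_mul_eq_mul_div, le_div_iff₀ (Real.sqrt_pos.2 hδ₁),
      mul_sqrt_le_iff (norm_nonneg _) (by positivity) hδ₁.le, mul_pow]
    exact norm_sq_apply_mul_le_of_eq_graph hφ x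
  rw [mul_sqrt_le_iff φ.opNorm_nonneg hδ₀ hδ₁.le] at ht
  rw [div_le_iff₀ (by positivity), ← pow_le_pow_iff_left₀ φ.opNorm_nonneg (by positivity)
    two_ne_zero, mul_pow, Real.sq_sqrt (by positivity)]
  linarith

theorem norm_starProjection_sub_starProjection_eq_of_eq_graph {φ : V →L[ℝ] Vᗮ}
    (hφ : (W : Set E) = {y | ∃ x : V, y = (x : E) + (φ x : E)}) :
    ‖V.starProjection - W.starProjection‖ = ‖φ‖ / √(1 + ‖φ‖ ^ 2) :=
  (norm_starProjection_sub_starProjection_le_of_eq_graph hφ).antisymm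
    (le_norm_starProjection_sub_starProjection_of_eq_graph hφ)

end OrthogonalProjection

theorem grassmannian_local_structure_general (n : ℕ)
    (V W : Submodule ℝ (Vn n)) :
    (‖projL V - projL W‖ ≤ 1 ∧
      (‖projL V - projL W‖ = 1 ↔ V ⊓ Wᗮ ≠ ⊥ ∨ Vᗮ ⊓ W ≠ ⊥)) ∧
    (‖projL V - projL W‖ < 1 →
      (∀ x ∈ W, ‖x‖ ≤ (Real.sqrt (1 - ‖projL V - projL W‖ ^ 2))⁻¹ * ‖projL V x‖) ∧
      Function.Bijective (fun x : W => Submodule.orthogonalProjectionOnto V (x : Vn n)) ∧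
      ∃ φ : V →L[ℝ] Vᗮ,
        (W : Set (Vn n)) = {y | ∃ x : V, y = (x : Vn n) + (φ x : Vn n)}) ∧
    (∀ φ : V →L[ℝ] Vᗮ,
      (W : Set (Vn n)) = {y | ∃ x : V, y = (x : Vn n) + (φ x : Vn n)} →
      ‖projL V - projL W‖ = ‖φ‖ / Real.sqrt (1 + ‖φ‖ ^ 2)) :=
  ⟨⟨norm_starProjection_sub_starProjection_le_one,
      norm_starProjection_sub_starProjection_eq_one_iff⟩,
    fun h => ⟨fun _ hx => norm_le_of_norm_sub_lt_one h hx,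
      bijective_orthogonalProjectionOnto_of_norm_sub_lt_one h,
      exists_eq_graph_of_bijective (bijective_orthogonalProjectionOnto_of_norm_sub_lt_one h)⟩,
    fun _ hφ => norm_starProjection_sub_starProjection_eq_of_eq_graph hφ⟩

/-- **Local structure of the Grassmannian.** -/
theorem grassmannian_local_structure (n d : ℕ) (hdn : d ≤ n)
    (V W : Submodule ℝ (Vn n))
    (hV : Module.finrank ℝ V = d) (hW : Module.finrank ℝ W = d) :
    (‖projL V - projL W‖ ≤ 1 ∧
      (‖projL V - projL W‖ = 1 ↔ V ⊓ Wᗮ ≠ ⊥ ∨ Vᗮ ⊓ W ≠ ⊥)) ∧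
    (‖projL V - projL W‖ < 1 →
      (∀ x ∈ W, ‖x‖ ≤ (Real.sqrt (1 - ‖projL V - projL W‖ ^ 2))⁻¹ * ‖projL V x‖) ∧
      Function.Bijective (fun x : W => Submodule.orthogonalProjectionOnto V (x : Vn n)) ∧
      ∃ φ : V →L[ℝ] Vᗮ,
        (W : Set (Vn n)) = {y | ∃ x : V, y = (x : Vn n) + (φ x : Vn n)}) ∧
    (∀ φ : V →L[ℝ] Vᗮ,
      (W : Set (Vn n)) = {y | ∃ x : V, y = (x : Vn n) + (φ x : Vn n)} →
      ‖projL V - projL W‖ = ‖φ‖ / Real.sqrt (1 + ‖φ‖ ^ 2)) :=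
  grassmannian_local_structure_general n V W
end Paper
end
end
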